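/- Let (X_1, σ_1) and (X_2, σ_2) be two d-dimensionally connected (d−1)-rooted simplicial complexes that are locally finite above dimension d−1. If B_{X_1}(σ_1; r) ≅ B_{X_2}(σ_2; r) for every radius r ≥ 0, then (X_1, σ_1) ≅ (X_2, σ_2). -/

import Mathlib

open MeasureTheory Filter Finset Asymptotics
open scoped ENNReal NNReal Classical

namespace RSC

/-- An abstract simplicial complex on a vertex type `V`: a collection of
nonempty finite sets closed under taking nonempty subsets. -/
structure SComplex (V : Type*) where
  faces : Set (Finset V)
  nonempty_of_mem : ∀ σ ∈ faces, σ.Nonempty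
  down_closed : ∀ σ ∈ faces, ∀ τ : Finset V, τ ⊆ σ → τ.Nonempty → τ ∈ faces

variable {V W : Type*}

/-- The set of `k`-dimensional simplices (sets of cardinality `k+1`). -/
def simplices (X : SComplex V) (k : ℕ) : Set (Finset V) :=
  {σ | σ ∈ X.faces ∧ σ.card = k + 1}

/-- `s_k(X)`, the number of `k`-dimensional simplices. -/
noncomputable def scount (X : SComplex V) (k : ℕ) : ℕ :=
  (simplices X k).ncard

/-- Two `(d-1)`-simplices are adjacent if some `d`-simplex contains both. -/
def Adj (X : SComplex V) (d : ℕ) (σ σ' : Finset V) : Prop :=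
  σ ∈ simplices X (d - 1) ∧ σ' ∈ simplices X (d - 1) ∧
    ∃ τ ∈ simplices X d, σ ⊆ τ ∧ σ' ⊆ τ

/-- `d`-dimensional connectivity of `(d-1)`-simplices (connection through
`d`-dimensional paths). -/
def Conn (X : SComplex V) (d : ℕ) (σ σ' : Finset V) : Prop :=
  σ ∈ simplices X (d - 1) ∧ σ' ∈ simplices X (d - 1) ∧
    Relation.ReflTransGen (Adj X d) σ σ'

/-- The `d`-dimensional connected component of a `(d-1)`-simplex, as the set of
`(d-1)`-simplices connected to it. -/
def component (X : SComplex V) (d : ℕ) (σ : Finset V) : Set (Finset V) :=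
  {σ' | Conn X d σ σ'}

/-- The collection of `d`-dimensional connected components. -/
def components (X : SComplex V) (d : ℕ) : Set (Set (Finset V)) :=
  {C | ∃ σ ∈ simplices X (d - 1), C = component X d σ}

/-- `s_{d-1}(C_max)`: the number of `(d-1)`-simplices of the largest
`d`-dimensional connected component. -/
noncomputable def maxCompCard (X : SComplex V) (d : ℕ) : ℕ :=
  sSup (Set.ncard '' components X d)

/-- `s_{d-1}(C_(2))`: the number of `(d-1)`-simplices of the second largest
`d`-dimensional connected component. -/
noncomputable def secondCompCard (X : SComplex V) (d : ℕ) : ℕ :=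
  sSup {m | ∃ C₁ ∈ components X d, ∃ C₂ ∈ components X d,
    C₁ ≠ C₂ ∧ m = min C₁.ncard C₂.ncard}

/-- `C` is a largest `d`-dimensional connected component. -/
def IsMaxComponent (X : SComplex V) (d : ℕ) (C : Set (Finset V)) : Prop :=
  C ∈ components X d ∧ ∀ C' ∈ components X d, C'.ncard ≤ C.ncard

/-- `C` is a second largest `d`-dimensional connected component (with respect to
some choice of a largest component, ties broken arbitrarily). -/
def IsSecondComponent (X : SComplex V) (d : ℕ) (C : Set (Finset V)) : Prop :=
  ∃ C₀, IsMaxComponent X d C₀ ∧ C ∈ components X d ∧ C ≠ C₀ ∧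
    ∀ C' ∈ components X d, C' ≠ C₀ → C'.ncard ≤ C.ncard

/-- `s_0(C)`: the number of vertices contained in simplices of a component `C`. -/
noncomputable def vertexCard (C : Set (Finset V)) : ℕ :=
  (⋃ σ ∈ C, (σ : Set V)).ncard

/-! ### Neighborhoods -/

/-- The faces of the radius-`r` neighborhood of a `(d-1)`-simplex `σ₀`,
with respect to `d`-dimensional adjacency. -/
def ballFaces (X : SComplex V) (d : ℕ) (σ₀ : Finset V) : ℕ → Set (Finset V)
  | 0 => {ρ | ρ ⊆ σ₀ ∧ ρ.Nonempty}
  | r + 1 => ballFaces X d σ₀ r ∪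
      {ρ | ρ.Nonempty ∧ ∃ τ ∈ simplices X d,
        (∃ σ ∈ simplices X (d - 1), σ ∈ ballFaces X d σ₀ r ∧ σ ⊆ τ) ∧ ρ ⊆ τ}

lemma ballFaces_down (X : SComplex V) (d : ℕ) (σ₀ : Finset V) :
    ∀ r, ∀ ρ ∈ ballFaces X d σ₀ r, ∀ π : Finset V, π ⊆ ρ → π.Nonempty →
      π ∈ ballFaces X d σ₀ r := by
  intro r
  induction r with
  | zero =>
    rintro ρ ⟨h1, -⟩ π hsub hne
    exact ⟨hsub.trans h1, hne⟩
  | succ r ih =>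
    rintro ρ (h | ⟨-, τ, hτ, hσ, hρτ⟩) π hsub hne
    · exact Or.inl (ih ρ h π hsub hne)
    · exact Or.inr ⟨hne, τ, hτ, hσ, hsub.trans hρτ⟩

/-- The radius-`r` neighborhood `B_X(σ₀; r)` of a `(d-1)`-simplex `σ₀`,
as a simplicial complex. -/
def ball (X : SComplex V) (d : ℕ) (σ₀ : Finset V) (r : ℕ) : SComplex V where
  faces := X.faces ∩ ballFaces X d σ₀ r
  nonempty_of_mem := fun σ h => X.nonempty_of_mem σ h.1
  down_closed := fun σ h τ hsub hne =>
    ⟨X.down_closed σ h.1 τ hsub hne, ballFaces_down X d σ₀ r σ h.2 τ hsub hne⟩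

/-! ### Rooted complexes and isomorphisms -/

/-- A rooted simplicial complex. -/
structure Rooted (V : Type*) where
  cplx : SComplex V
  root : Finset V

/-- Isomorphism of rooted simplicial complexes: a bijection of vertex sets
preserving all simplices and mapping root to root. -/
def Iso (A : Rooted V) (B : Rooted W) : Prop :=
  ∃ φ : V → W, Set.InjOn φ {v | ({v} : Finset V) ∈ A.cplx.faces} ∧
    (∀ σ ∈ A.cplx.faces, σ.image φ ∈ B.cplx.faces) ∧
    (∀ τ ∈ B.cplx.faces, ∃ σ ∈ A.cplx.faces, σ.image φ = τ) ∧
    A.root.image φ = B.root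

/-- The rooted radius-`r` neighborhood of the root of a rooted complex. -/
def ballOf (A : Rooted V) (d : ℕ) (r : ℕ) : Rooted V :=
  ⟨ball A.cplx d A.root r, A.root⟩

/-! ### Local weak convergence in probability -/

/-- Local weak convergence in probability of a sequence of random finite
`d`-dimensional simplicial complexes to a random `(d-1)`-rooted simplicial
complex `Y` defined on a probability space `(Ω', ν)`. -/
def ConvLWCinP {Ω : ℕ → Type*} [∀ n, MeasurableSpace (Ω n)]
    (μ : ∀ n, Measure (Ω n)) {Vn : ℕ → Type*}
    (X : ∀ n, Ω n → SComplex (Vn n)) (d : ℕ)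
    {Ω' : Type*} [MeasurableSpace Ω'] (ν : Measure Ω') (Y : Ω' → Rooted ℕ) : Prop :=
  ∀ (r : ℕ) (H : Rooted ℕ), ∀ ε > (0 : ℝ),
    Tendsto (fun n => ((μ n) {ω |
        ε < |(Set.ncard {σ | σ ∈ simplices (X n ω) (d - 1) ∧
                Iso (ballOf ⟨X n ω, σ⟩ d r) H} : ℝ) / (scount (X n ω) (d - 1) : ℝ)
              - (ν {ω' | Iso (ballOf (Y ω') d r) H}).toReal|}).toReal)
      atTop (nhds 0)

/-! ### The multi-parameter random simplicial complex -/

/-- Bernoulli measure with success probability `p` on `Bool`. -/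
noncomputable def bern (p : ℝ) : Measure Bool :=
  (PMF.bernoulli (min (Real.toNNReal p) 1) (min_le_right _ _)).toMeasure

instance (p : ℝ) : IsProbabilityMeasure (bern p) :=
  PMF.toMeasure.isProbabilityMeasure _

/-- The law of the independent coins deciding the presence of simplices:
the coin of a potential `k`-dimensional simplex `σ` (with `σ.card = k+1`)
has success probability `p k`. -/
noncomputable def coinMeasure (n : ℕ) (p : ℕ → ℝ) :
    Measure (Finset (Fin n) → Bool) :=
  Measure.pi fun σ => bern (p (σ.card - 1))

instance (n : ℕ) (p : ℕ → ℝ) : IsProbabilityMeasure (coinMeasure n p) := by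
  unfold coinMeasure; infer_instance

/-- The multi-parameter random simplicial complex `MRSC_d(n; p)` built from
the independent coins `ω`: a simplex of dimension `≤ d` is present iff the
coins of all its faces of dimension `≥ 1` are successes. -/
noncomputable def mrscComplex (d n : ℕ) (ω : Finset (Fin n) → Bool) :
    SComplex (Fin n) where
  faces := {σ | σ.Nonempty ∧ σ.card ≤ d + 1 ∧ ∀ τ ⊆ σ, 2 ≤ τ.card → ω τ = true}
  nonempty_of_mem := fun _ h => h.1
  down_closed := fun _ h _ hsub hne =>
    ⟨hne, le_trans (Finset.card_le_card hsub) h.2.1,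
      fun ρ hρ h2 => h.2.2 ρ (hρ.trans hsub) h2⟩

/-- Parameters of the Linial–Meshulam complex `LM_d(n, lam/n)` seen as a
multi-parameter random simplicial complex. -/
noncomputable def lmParam (d : ℕ) (lam : ℝ) (n : ℕ) : ℕ → ℝ :=
  fun k => if k = d then lam / n else 1

/-- Parameters of `MRSC_2(n; p₁, p₂)`. -/
noncomputable def mrsc2Param (p₁ p₂ : ℕ → ℝ) (n : ℕ) : ℕ → ℝ :=
  fun k => if k = 1 then p₁ n else if k = 2 then p₂ n else 1

/-- `q_d`, the probability that a fixed `(d-1)`-simplex is present. -/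
noncomputable def qParam (d : ℕ) (p : ℕ → ℝ) : ℝ :=
  ∏ k ∈ Finset.Icc 1 (d - 1), p k ^ d.choose (k + 1)

/-- `r_d`, the conditional probability that a fixed `d`-simplex containing a
present `(d-1)`-simplex is present. -/
noncomputable def rParam (d : ℕ) (p : ℕ → ℝ) : ℝ :=
  ∏ k ∈ Finset.Icc 1 d, p k ^ d.choose k

/-- Conditional probability `P(A | B)`. -/
noncomputable def condProb {Ω : Type*} [MeasurableSpace Ω]
    (μ : Measure Ω) (A B : Set Ω) : ℝ :=
  (μ (A ∩ B)).toReal / (μ B).toReal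

/-- `I_lam = lam - 1 - log lam`, the large deviation rate function of the
Poisson distribution. -/
noncomputable def Ifun (lam : ℝ) : ℝ := lam - 1 - Real.log lam

/-- `γ_lam`: the smallest solution in `[0,1]` of `γ = exp (-lam (1 - γ^d))`,
i.e. the extinction probability of a branching process with offspring
distribution `d · Poi(lam)`. -/
noncomputable def gammaLam (d : ℕ) (lam : ℝ) : ℝ :=
  sInf {γ : ℝ | γ ∈ Set.Icc (0 : ℝ) 1 ∧ γ = Real.exp (-lam * (1 - γ ^ d))}


/-! ### Breadth-first exploration -/

/-- Insert an element into a list sorted according to `key`. -/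
def insertKey {α : Type*} (key : α → ℕ) (a : α) : List α → List α
  | [] => [a]
  | b :: t => if key a ≤ key b then a :: b :: t else b :: insertKey key a t

/-- Sort a list according to an injective key (a fixed linear order). -/
def sortByKey {α : Type*} (key : α → ℕ) (l : List α) : List α :=
  l.foldr (insertKey key) []

/-- One step of the breadth-first exploration of a `d`-dimensional connected
component.  A state consists of the set of faces discovered so far together
with the queue of active `(d-1)`-simplices; at each step the first active
`(d-1)`-simplex is explored: all new `d`-simplices containing it (and whose
new vertices avoid `avoid`) are detected, their faces are added to the
discovered set, and the newly detected `(d-1)`-simplices are appended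
(in the fixed linear order given by `key`) to the queue. -/
noncomputable def exploreStep [Fintype V] [DecidableEq V] (key : Finset V → ℕ)
    (X : SComplex V) (d : ℕ) (avoid : Set V) :
    Set (Finset V) × List (Finset V) → Set (Finset V) × List (Finset V)
  | (vis, []) => (vis, [])
  | (vis, σ :: rest) =>
    let newTri : Set (Finset V) :=
      {τ | τ ∈ X.faces ∧ τ.card = d + 1 ∧ σ ⊆ τ ∧ τ ∉ vis ∧
        ∀ v ∈ τ, v ∉ σ → v ∉ avoid}
    let vis' := vis ∪ {ρ | ρ.Nonempty ∧ ∃ τ ∈ newTri, ρ ⊆ τ}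
    let newAct : Finset (Finset V) :=
      Finset.univ.filter fun σ' => σ'.card = d ∧ σ' ∉ vis ∧ ∃ τ ∈ newTri, σ' ⊆ τ
    (vis', rest ++ sortByKey key newAct.toList)

/-- The breadth-first exploration started from a given initial state. -/
noncomputable def exploreFrom [Fintype V] [DecidableEq V] (key : Finset V → ℕ)
    (X : SComplex V) (d : ℕ) (avoid : Set V)
    (init : Set (Finset V) × List (Finset V)) (k : ℕ) :
    Set (Finset V) × List (Finset V) :=
  (exploreStep key X d avoid)^[k] init

/-- The breadth-first exploration of the `d`-dimensional connected component of
the `(d-1)`-simplex `σ₀`; `(explore key X d σ₀ k).1` is the complex `𝒳_k`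
discovered after `k` steps and `(explore key X d σ₀ k).2` is the queue of
active `(d-1)`-simplices. -/
noncomputable def explore [Fintype V] [DecidableEq V] (key : Finset V → ℕ)
    (X : SComplex V) (d : ℕ) (σ₀ : Finset V) (k : ℕ) :
    Set (Finset V) × List (Finset V) :=
  exploreFrom key X d ∅ ({ρ | ρ ⊆ σ₀ ∧ ρ.Nonempty}, [σ₀]) k

/-- Number of edges (`(d-1)=1`-simplices when `d = 2`) in the ball `B_X(σ; r)`;
more generally the number of `(d-1)`-simplices. -/
noncomputable def ballEdgeCount (X : SComplex V) (d : ℕ) (σ : Finset V) (r : ℕ) : ℕ :=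
  Set.ncard {τ | τ ∈ (ball X d σ r).faces ∧ τ.card = d}

/-- Number of `(d-1)`-simplices in the boundary `∂B_X(σ; r)`. -/
noncomputable def bdryEdgeCount (X : SComplex V) (d : ℕ) (σ : Finset V) (r : ℕ) : ℕ :=
  Set.ncard {τ | τ ∈ (ball X d σ r).faces ∧ τ.card = d ∧
    τ ∉ (ball X d σ (r - 1)).faces}

/-- The vertex set of the ball `B_X(σ; r)`. -/
def ballVerts (X : SComplex V) (d : ℕ) (σ : Finset V) (r : ℕ) : Set V :=
  {v | ({v} : Finset V) ∈ (ball X d σ r).faces}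

/-- The breadth-first exploration started from the ball `B_X(σ₀; r)` fully
explored, with the `(d-1)`-simplices of its boundary active, avoiding the
vertex set `avoid`. -/
noncomputable def exploreBall [Fintype V] [DecidableEq V] (key : Finset V → ℕ)
    (X : SComplex V) (d : ℕ) (avoid : Set V) (σ₀ : Finset V) (r k : ℕ) :
    Set (Finset V) × List (Finset V) :=
  exploreFrom key X d avoid
    ((ball X d σ₀ r).faces,
      sortByKey key ((Finset.univ.filter fun τ : Finset V =>
        τ.card = d ∧ τ ∈ (ball X d σ₀ r).faces ∧
          τ ∉ (ball X d σ₀ (r - 1)).faces).toList)) k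

/-- `deg_{c-1, m}^T (ρ)`: the number of `m`-dimensional simplices
(sets of cardinality `m+1`) in the collection `T` containing `ρ`. -/
noncomputable def degIn (T : Set (Finset V)) (ρ : Finset V) (m : ℕ) : ℕ :=
  Set.ncard {τ | τ ∈ T ∧ τ.card = m + 1 ∧ ρ ⊆ τ}

/-- `max_{ρ ∈ S_{c-1}(T)} deg_{c-1, m}^T (ρ)`. -/
noncomputable def maxDegIn (T : Set (Finset V)) (c m : ℕ) : ℕ :=
  sSup ((fun ρ => degIn T ρ m) '' {ρ | ρ ∈ T ∧ ρ.card = c})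

/-- `s_0(T)`: the number of vertices of the collection of faces `T`. -/
noncomputable def vertsOf (T : Set (Finset V)) : ℕ :=
  Set.ncard {v : V | ({v} : Finset V) ∈ T}

/-- The canonical face `{0, …, c-1}` in `Fin n`. -/
def canonFace (n c : ℕ) : Finset (Fin n) :=
  Finset.univ.filter fun i => (i : ℕ) < c

/-- The canonical `ℓ`-dimensional face `{0, …, ℓ-1, d}` in `Fin n`;
it is contained in the canonical `d`-simplex but not in the canonical
`(d-1)`-simplex. -/
def canonRho (n ℓ d : ℕ) : Finset (Fin n) :=
  Finset.univ.filter fun i => (i : ℕ) < ℓ ∨ (i : ℕ) = d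

/-- `p_{d,ℓ} = P(τ ∈ X_n | σ, ρ ∈ X_n)` for simplices `τ, σ, ρ` of dimensions
`d`, `d-1` and `ℓ` respectively with `σ, ρ ⊆ τ` and `ρ ⊄ σ`. -/
noncomputable def pdl (d n : ℕ) (p : ℕ → ℝ) (ℓ : ℕ) : ℝ :=
  condProb (coinMeasure n p)
    {ω | canonFace n (d + 1) ∈ (mrscComplex d n ω).faces}
    {ω | canonFace n d ∈ (mrscComplex d n ω).faces ∧
         canonRho n ℓ d ∈ (mrscComplex d n ω).faces}

/-- The quantity `p_k^F` of Lemma 3.2 (forward estimate), with `e` the `o(1)`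
error term. -/
noncomputable def pkFval (d n : ℕ) (p : ℕ → ℝ) (lam e : ℝ) (k : ℕ)
    (T : Set (Finset (Fin n))) (σk : Finset (Fin n)) : ℝ :=
  (1 - ((k : ℝ) - 1) * lam / n -
      ∑ ℓ ∈ Finset.Icc 1 (d - 1),
        ∑ ρ ∈ σk.powerset.filter (fun ρ => ρ.card = ℓ),
          (degIn T ρ (d - 1) : ℝ) * pdl d n p ℓ) * (lam / n + e)

/-- The quantity `p_k^B` of Lemma 3.3 (backward estimate), with `e` the `o(1)`
error term. -/
noncomputable def pkBval (d n : ℕ) (p : ℕ → ℝ) (lam e : ℝ)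
    (T : Set (Finset (Fin n))) (σk : Finset (Fin n)) : ℝ :=
  (1 - ∑ ℓ ∈ Finset.Icc 1 (d - 1),
        ∑ ρ ∈ σk.powerset.filter (fun ρ => ρ.card = ℓ),
          (degIn T ρ (d - 1) : ℝ) * pdl d n p ℓ) * (lam / n + e)

/-- `F_k`: `d` times the number of forward `d`-simplices detected when
exploring `σk` from the state with discovered faces `T`, i.e. the number of
new forward `(d-1)`-simplices. -/
noncomputable def forwardCount (d n : ℕ) (Xc : SComplex (Fin n))
    (T : Set (Finset (Fin n))) (σk : Finset (Fin n)) : ℕ :=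
  d * Set.ncard {v : Fin n | ({v} : Finset (Fin n)) ∉ T ∧
    insert v σk ∈ Xc.faces}

/-- `B_k`: `d` times the number of backward `d`-simplices detected when
exploring `σk` from the state with discovered faces `T`, i.e. the number of
new backward `(d-1)`-simplices. -/
noncomputable def backwardCount (d n : ℕ) (Xc : SComplex (Fin n))
    (T : Set (Finset (Fin n))) (σk : Finset (Fin n)) : ℕ :=
  d * Set.ncard {v : Fin n | ({v} : Finset (Fin n)) ∈ T ∧ v ∉ σk ∧
    (∀ ρ : Finset (Fin n), ρ ⊆ insert v σk → ρ.card = d → v ∈ ρ → ρ ∉ T) ∧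
    insert v σk ∈ Xc.faces}

/-- The probability `P(Bin(m, q) = j)`. -/
noncomputable def binomPMF (m : ℕ) (q : ℝ) (j : ℕ) : ℝ :=
  m.choose j * q ^ j * (1 - q) ^ (m - j)

/-- The upper tail `P(d · Bin(m, q) ≥ t)` of `d` times a binomial random
variable. -/
noncomputable def scaledBinomTail (d m : ℕ) (q : ℝ) (t : ℕ) : ℝ :=
  ∑ j ∈ Finset.range (m + 1), if t ≤ d * j then binomPMF m q j else 0

/-! ### The `(d-1)`-rooted Poisson tree and Galton–Watson trees -/

/-- The fresh vertex attached to the tree node encoded by `l`. -/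
def apex (d : ℕ) (l : List ℕ) : ℕ := d + Encodable.encode l

/-- The `(d-1)`-simplex of the node of the `(d-1)`-rooted tree indexed by
the path `l` (most recent step first): the root is `{0, …, d-1}` and the node
`c :: l` is obtained from the node `l` by attaching the fresh vertex
`apex d (c / d :: l)` of its `(c / d)`-th child `d`-simplex and removing its
`(c % d)`-th smallest vertex. -/
def nodeSimplex (d : ℕ) : List ℕ → Finset ℕ
  | [] => Finset.range d
  | c :: l =>
    ((nodeSimplex d l).erase (((nodeSimplex d l).sort (· ≤ ·)).getD (c % d) 0))
      ∪ {apex d (c / d :: l)}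

/-- Which nodes are present, given the number `N l` of child `d`-simplices of
every node `l`: each child `d`-simplex carries `d` child `(d-1)`-simplices. -/
def nodePresent (d : ℕ) (N : List ℕ → ℕ) : List ℕ → Prop
  | [] => True
  | c :: l => nodePresent d N l ∧ c < d * N l

/-- The `(d-1)`-rooted tree complex built from the family of offspring numbers
`N`: when every `N l` is an independent `Poisson(lam)` random variable this is
the `(d-1)`-rooted Poisson tree with parameter `lam`. -/
def poissonTreeComplex (d : ℕ) (N : List ℕ → ℕ) : SComplex ℕ where
  faces := {ρ | ρ.Nonempty ∧ (ρ ⊆ Finset.range d ∨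
    ∃ l i, nodePresent d N l ∧ i < N l ∧
      ρ ⊆ nodeSimplex d l ∪ {apex d (i :: l)})}
  nonempty_of_mem := fun _ h => h.1
  down_closed := by
    rintro σ ⟨h1, h2⟩ τ hsub hne
    refine ⟨hne, ?_⟩
    rcases h2 with h | ⟨l, i, h3, h4, h5⟩
    · exact Or.inl (hsub.trans h)
    · exact Or.inr ⟨l, i, h3, h4, hsub.trans h5⟩

/-- The `(d-1)`-rooted Poisson tree (as a rooted complex) built from the
offspring numbers `N`. -/
def poissonTreeRooted (d : ℕ) (N : List ℕ → ℕ) : Rooted ℕ :=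
  ⟨poissonTreeComplex d N, Finset.range d⟩

/-- The Poisson probability mass function `e^{-lam} lam^m / m!`. -/
noncomputable def poiPMF (lam : ℝ) (m : ℕ) : ℝ :=
  Real.exp (-lam) * lam ^ m / (Nat.factorial m)

/-- The probability mass function of `d` times a `Poisson(lam)` random
variable. -/
noncomputable def dPoiPMF (d : ℕ) (lam : ℝ) (m : ℕ) : ℝ :=
  if d ∣ m then Real.exp (-lam) * lam ^ (m / d) / (Nat.factorial (m / d)) else 0

/-- The family tree of a Galton–Watson branching process whose individuals `l`
have `N l` children: the set of individuals ever produced. -/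
def gwTree (N : List ℕ → ℕ) : Set (List ℕ) :=
  {l | nodePresent 1 N l}

/-- The restricted generating function
`G(z) = E[z^C · 1_{C < ∞}]` of the total progeny `C` of the Galton–Watson
process with offspring numbers `N`. -/
noncomputable def gwGen {Ω : Type*} [MeasurableSpace Ω] (μ : Measure Ω)
    (N : Ω → List ℕ → ℕ) (z : ℝ) : ℝ :=
  ∫ ω, (if (gwTree (N ω)).Finite then z ^ (gwTree (N ω)).ncard else 0) ∂μ

/-- `1 / s_{d-1}(C(o))` for a rooted complex, with the convention that it is
`0` for an infinite component. -/
noncomputable def invCompCard (d : ℕ) (A : Rooted ℕ) : ℝ :=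
  if (component A.cplx d A.root).Finite then
    1 / ((component A.cplx d A.root).ncard : ℝ) else 0

/-! ### The metric space of rooted complexes -/

/-- `X` is locally finite above dimension `d-1`: every simplex of dimension
`≥ d-1` (cardinality `≥ d`) is contained in finitely many simplices of the
next dimension. -/
def LocallyFinite (X : SComplex V) (d : ℕ) : Prop :=
  ∀ σ ∈ X.faces, d ≤ σ.card →
    {τ | τ ∈ X.faces ∧ σ ⊆ τ ∧ τ.card = σ.card + 1}.Finite

/-- `X` is `d`-dimensionally connected: every pair of `(d-1)`-simplices is
joined by a `d`-dimensional path, and every face is contained in some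
`(d-1)`-simplex. -/
def DConnected (X : SComplex V) (d : ℕ) : Prop :=
  (∀ σ ∈ simplices X (d - 1), ∀ σ' ∈ simplices X (d - 1), Conn X d σ σ') ∧
    ∀ ρ ∈ X.faces, ∃ σ ∈ simplices X (d - 1), ρ ⊆ σ

/-- A member of the space `S_{d-1}`: a `(d-1)`-rooted, `d`-dimensionally
connected simplicial complex that is locally finite above dimension `d-1`. -/
def GoodRooted (d : ℕ) (A : Rooted ℕ) : Prop :=
  A.root ∈ simplices A.cplx (d - 1) ∧ LocallyFinite A.cplx d ∧
    DConnected A.cplx d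

/-- The local distance `1 / (1 + R*)` on rooted simplicial complexes, where
`R* = sup {R | B(σ₁; R) ≅ B(σ₂; R)}` (the distance being `0` if all
neighborhoods are isomorphic). -/
noncomputable def rdist (d : ℕ) (A B : Rooted ℕ) : ℝ :=
  if ∀ R : ℕ, Iso (ballOf A d R) (ballOf B d R) then 0
  else
    1 / (1 + ((sSup {R : ℕ | Iso (ballOf A d R) (ballOf B d R)} : ℕ) : ℝ))

/-!
An isomorphism of the `r`-balls restricts to isomorphisms of all smaller balls: the forward
inclusion is an induction on the radius, and the backward one is the forward one for the inverse
map. Local finiteness makes every ball finite, so the isomorphisms `φ r` of the `r`-balls take only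
finitely many values on each vertex, and along an ultrafilter refining `atTop` they converge
pointwise (a König's lemma argument). Since every face lies in some ball by `d`-connectivity, the
limit map is an isomorphism of the whole complexes.
-/

end RSC

lemma Ultrafilter.exists_eventually_eq_of_finite {ι α β : Type*} {U : Ultrafilter ι}
    {S : Set α} {f : ι → α → β} {T : α → Set β} (hT : ∀ a ∈ S, (T a).Finite)
    (hf : ∀ a ∈ S, ∀ᶠ i in U, f i a ∈ T a) : ∃ g : α → β, ∀ a ∈ S, ∀ᶠ i in U, f i a = g a := by
  obtain ⟨i₀, -⟩ := U.nonempty_of_mem Filter.univ_mem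
  have : ∀ a, ∃ b, a ∈ S → ∀ᶠ i in U, f i a = b := by
    intro a
    by_cases ha : a ∈ S
    · obtain ⟨b, -, hb⟩ := (Ultrafilter.eventually_exists_mem_iff (P := fun b i => f i a = b)
        (hT a ha)).mp ((hf a ha).mono fun i hi => ⟨f i a, hi, rfl⟩)
      exact ⟨b, fun _ => hb⟩
    · exact ⟨f i₀ a, (absurd · ha)⟩
  choose g hg using this
  exact ⟨g, hg⟩

namespace RSC

variable {V W : Type*}

namespace SComplex

def verts (X : SComplex V) : Set V :=
  {v | ({v} : Finset V) ∈ X.faces}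

lemma coe_subset_verts {X : SComplex V} {ρ : Finset V} (hρ : ρ ∈ X.faces) :
    (ρ : Set V) ⊆ X.verts := fun v hv =>
  X.down_closed ρ hρ {v} (Finset.singleton_subset_iff.mpr hv) (Finset.singleton_nonempty v)

lemma verts_finite {X : SComplex V} (h : X.faces.Finite) : X.verts.Finite :=
  h.preimage Finset.singleton_injective.injOn

lemma card_image_of_injOn_verts {X : SComplex V} {φ : V → W} (hφ : Set.InjOn φ X.verts)
    {ρ : Finset V} (hρ : ρ ∈ X.faces) : (ρ.image φ).card = ρ.card :=
  Finset.card_image_of_injOn (hφ.mono (X.coe_subset_verts hρ))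

lemma image_image_invFunOn [Nonempty V] {X : SComplex V} {φ : V → W}
    (hφ : Set.InjOn φ X.verts) {ρ : Finset V} (hρ : ρ ∈ X.faces) :
    (ρ.image φ).image (Function.invFunOn φ X.verts) = ρ := by
  rw [Finset.image_image, Finset.image_congr (f := Function.invFunOn φ X.verts ∘ φ) (g := id)
    (hφ.leftInvOn_invFunOn.mono (X.coe_subset_verts hρ)), Finset.image_id]

end SComplex

structure IsFaceIso (φ : V → W) (X : SComplex V) (Y : SComplex W) : Prop where
  injOn : Set.InjOn φ X.verts
  mapsTo : Set.MapsTo (Finset.image φ) X.faces Y.faces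
  surjOn : Set.SurjOn (Finset.image φ) X.faces Y.faces

lemma iso_iff_exists_isFaceIso {A : Rooted V} {B : Rooted W} :
    Iso A B ↔ ∃ φ, IsFaceIso φ A.cplx B.cplx ∧ A.root.image φ = B.root :=
  ⟨fun ⟨φ, hinj, hmaps, hsurj, hroot⟩ => ⟨φ, ⟨hinj, hmaps, hsurj⟩, hroot⟩,
    fun ⟨φ, ⟨hinj, hmaps, hsurj⟩, hroot⟩ => ⟨φ, hinj, hmaps, hsurj, hroot⟩⟩

namespace IsFaceIso

variable {φ : V → W} {X : SComplex V} {Y : SComplex W}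

lemma surjOn_verts (h : IsFaceIso φ X Y) : Set.SurjOn φ X.verts Y.verts := by
  intro w hw
  obtain ⟨ρ, hρ, hρw⟩ := h.surjOn hw
  obtain ⟨v, hv⟩ := X.nonempty_of_mem ρ hρ
  refine ⟨v, X.coe_subset_verts hρ hv, ?_⟩
  simpa [hρw] using Finset.mem_image_of_mem φ hv

lemma invFunOn [Nonempty V] (h : IsFaceIso φ X Y) :
    IsFaceIso (Function.invFunOn φ X.verts) Y X where
  injOn := h.surjOn_verts.rightInvOn_invFunOn.injOn
  mapsTo τ hτ := by
    obtain ⟨ρ, hρ, rfl⟩ := h.surjOn hτ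
    rwa [X.image_image_invFunOn h.injOn hρ]
  surjOn ρ hρ := ⟨ρ.image φ, h.mapsTo hρ, X.image_image_invFunOn h.injOn hρ⟩

end IsFaceIso

section Balls

variable {X : SComplex V} {d : ℕ} {σ₀ : Finset V}

lemma ballFaces_mono : Monotone (ballFaces X d σ₀) :=
  monotone_nat_of_le_succ fun _ => Set.subset_union_left

lemma ball_faces_mono : Monotone fun r => (ball X d σ₀ r).faces :=
  fun _ _ h => Set.inter_subset_inter_right _ (ballFaces_mono h)

lemma finite_setOf_simplices_superset (hlf : LocallyFinite X d) {σ : Finset V}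
    (hσ : σ ∈ simplices X (d - 1)) : {τ | τ ∈ simplices X d ∧ σ ⊆ τ}.Finite := by
  cases d with
  | zero =>
    refine (Set.finite_singleton σ).subset fun τ ⟨hτ, hστ⟩ => ?_
    exact (Finset.eq_of_subset_of_card_le hστ (by rw [hτ.2, hσ.2])).symm
  | succ d =>
    refine (hlf σ hσ.1 (by rw [hσ.2]; omega)).subset fun τ ⟨hτ, hστ⟩ => ?_
    exact ⟨hτ.1, hστ, by rw [hτ.2, hσ.2]; rfl⟩

lemma ballFaces_finite (hlf : LocallyFinite X d) (r : ℕ) : (ballFaces X d σ₀ r).Finite := by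
  induction r with
  | zero => exact σ₀.powerset.finite_toSet.subset fun ρ hρ => Finset.mem_powerset.mpr hρ.1
  | succ r ih =>
    refine ih.union (((ih.inter_of_left (simplices X (d - 1))).biUnion fun σ hσ =>
      (finite_setOf_simplices_superset hlf hσ.2).biUnion fun τ _ =>
        τ.powerset.finite_toSet).subset ?_)
    rintro ρ ⟨-, τ, hτ, ⟨σ, hσ, hσr, hστ⟩, hρτ⟩
    simp only [Set.mem_iUnion]
    exact ⟨σ, ⟨hσr, hσ⟩, τ, ⟨hτ, hστ⟩, Finset.mem_powerset.mpr hρτ⟩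

lemma ball_faces_finite (hlf : LocallyFinite X d) (r : ℕ) : (ball X d σ₀ r).faces.Finite :=
  (ballFaces_finite hlf r).subset Set.inter_subset_right

lemma exists_mem_ballFaces_of_reflTransGen (hσ₀ : σ₀ ∈ X.faces) {σ : Finset V}
    (h : Relation.ReflTransGen (Adj X d) σ₀ σ) : ∃ r, σ ∈ ballFaces X d σ₀ r := by
  induction h with
  | refl => exact ⟨0, subset_rfl, X.nonempty_of_mem σ₀ hσ₀⟩
  | tail _ hadj ih =>
    obtain ⟨r, hr⟩ := ih
    obtain ⟨hb, hc, τ, hτ, hbτ, hcτ⟩ := hadj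
    exact ⟨r + 1, Or.inr ⟨X.nonempty_of_mem _ hc.1, τ, hτ, ⟨_, hb, hr, hbτ⟩, hcτ⟩⟩

lemma exists_mem_ball (hσ₀ : σ₀ ∈ simplices X (d - 1)) (hconn : DConnected X d)
    {ρ : Finset V} (hρ : ρ ∈ X.faces) : ∃ r, ρ ∈ (ball X d σ₀ r).faces := by
  obtain ⟨σ, hσ, hρσ⟩ := hconn.2 ρ hρ
  obtain ⟨r, hr⟩ := exists_mem_ballFaces_of_reflTransGen hσ₀.1 (hconn.1 σ₀ hσ₀ σ hσ).2.2
  exact ⟨r, hρ, ballFaces_down X d σ₀ r σ hr ρ hρσ (X.nonempty_of_mem ρ hρ)⟩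

end Balls

section Restriction

variable {φ : V → W} {X₁ : SComplex V} {X₂ : SComplex W} {d R : ℕ} {σ₁ : Finset V}
  {σ₂ : Finset W}

lemma mapsTo_ball_of_le (hinj : Set.InjOn φ (ball X₁ d σ₁ R).verts)
    (hmaps : Set.MapsTo (Finset.image φ) (ball X₁ d σ₁ R).faces X₂.faces)
    (hroot : σ₁.image φ = σ₂) {s : ℕ} (hs : s ≤ R) :
    Set.MapsTo (Finset.image φ) (ball X₁ d σ₁ s).faces (ball X₂ d σ₂ s).faces := by
  have hsimplex : ∀ {k ρ}, ρ ∈ simplices X₁ k → ρ ∈ (ball X₁ d σ₁ R).faces →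
      ρ.image φ ∈ simplices X₂ k := fun hρ hρR =>
    ⟨hmaps hρR, by rw [(ball X₁ d σ₁ R).card_image_of_injOn_verts hinj hρR, hρ.2]⟩
  induction s with
  | zero =>
    rintro ρ ⟨hρ, hρσ, hne⟩
    exact ⟨hmaps (ball_faces_mono hs ⟨hρ, hρσ, hne⟩), hroot ▸ Finset.image_subset_image hρσ,
      hne.image φ⟩
  | succ s ih =>
    have hsR := (Nat.le_succ s).trans hs
    rintro ρ ⟨hρ, hρs | ⟨hne, τ, hτ, ⟨σ, hσ, hσs, hστ⟩, hρτ⟩⟩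
    · exact ball_faces_mono (Nat.le_succ s) (ih hsR ⟨hρ, hρs⟩)
    · have hτR : τ ∈ (ball X₁ d σ₁ R).faces := ball_faces_mono hs
        ⟨hτ.1, Or.inr ⟨X₁.nonempty_of_mem τ hτ.1, τ, hτ, ⟨σ, hσ, hσs, hστ⟩, subset_rfl⟩⟩
      have hσR : σ ∈ (ball X₁ d σ₁ R).faces := ball_faces_mono hsR ⟨hσ.1, hσs⟩
      exact ⟨hmaps (ball_faces_mono hs ⟨hρ, Or.inr ⟨hne, τ, hτ, ⟨σ, hσ, hσs, hστ⟩, hρτ⟩⟩),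
        Or.inr ⟨hne.image φ, τ.image φ, hsimplex hτ hτR,
          ⟨σ.image φ, hsimplex hσ hσR, (ih hsR ⟨hσ.1, hσs⟩).2, Finset.image_subset_image hστ⟩,
          Finset.image_subset_image hρτ⟩⟩

lemma IsFaceIso.restrict_ball (h : IsFaceIso φ (ball X₁ d σ₁ R) (ball X₂ d σ₂ R))
    (hσ₁ : σ₁ ∈ X₁.faces) (hroot : σ₁.image φ = σ₂) {s : ℕ} (hs : s ≤ R) :
    IsFaceIso φ (ball X₁ d σ₁ s) (ball X₂ d σ₂ s) := by
  obtain ⟨v, -⟩ := X₁.nonempty_of_mem σ₁ hσ₁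
  have : Nonempty V := ⟨v⟩
  have hσ₁R : σ₁ ∈ (ball X₁ d σ₁ R).faces :=
    ball_faces_mono (Nat.zero_le R) ⟨hσ₁, subset_rfl, X₁.nonempty_of_mem σ₁ hσ₁⟩
  have hψ := h.invFunOn
  have hroot' : σ₂.image (Function.invFunOn φ (ball X₁ d σ₁ R).verts) = σ₁ :=
    hroot ▸ (ball X₁ d σ₁ R).image_image_invFunOn h.injOn hσ₁R
  refine ⟨h.injOn.mono (Set.preimage_mono (ball_faces_mono hs)),
    mapsTo_ball_of_le h.injOn (fun ρ hρ => (h.mapsTo hρ).1) hroot hs, fun τ hτ => ?_⟩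
  refine ⟨_, mapsTo_ball_of_le hψ.injOn (fun τ hτ => (hψ.mapsTo hτ).1) hroot' hs hτ, ?_⟩
  obtain ⟨ρ, hρ, rfl⟩ := h.surjOn (ball_faces_mono hs hτ)
  rw [(ball X₁ d σ₁ R).image_image_invFunOn h.injOn hρ]

end Restriction

theorem exists_isFaceIso_of_exhaustion {X : SComplex V} {Y : SComplex W}
    {A : ℕ → SComplex V} {B : ℕ → SComplex W} {φ : ℕ → V → W}
    (hAX : ∀ s, (A s).faces ⊆ X.faces) (hBY : ∀ s, (B s).faces ⊆ Y.faces)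
    (hA_mono : Monotone fun s => (A s).faces)
    (hA : ∀ ρ ∈ X.faces, ∃ s, ρ ∈ (A s).faces) (hB : ∀ τ ∈ Y.faces, ∃ s, τ ∈ (B s).faces)
    (hA_fin : ∀ s, (A s).faces.Finite) (hB_fin : ∀ s, (B s).faces.Finite)
    (hφ : ∀ s r, s ≤ r → IsFaceIso (φ r) (A s) (B s)) :
    ∃ Φ : V → W, IsFaceIso Φ X Y ∧ ∀ ρ ∈ X.faces, ∃ r, ρ.image Φ = ρ.image (φ r) := by
  obtain ⟨U, hU⟩ := Ultrafilter.exists_le (atTop : Filter ℕ)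
  have hge : ∀ s, ∀ᶠ r in (U : Filter ℕ), s ≤ r := fun s => hU (eventually_ge_atTop s)
  obtain ⟨Φ, hΦ⟩ : ∃ Φ : V → W, ∀ v ∈ X.verts, ∀ᶠ r in U, φ r v = Φ v := by
    choose! s hs using fun v (hv : v ∈ X.verts) => hA {v} hv
    refine Ultrafilter.exists_eventually_eq_of_finite
      (fun v _ => (B (s v)).verts_finite (hB_fin _)) fun v hv => ?_
    filter_upwards [hge (s v)] with r hr
    simpa [SComplex.verts] using (hφ _ r hr).mapsTo (hs v hv)
  have himage : ∀ ρ ∈ X.faces, ∀ᶠ r in U, ρ.image (φ r) = ρ.image Φ := fun ρ hρ =>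
    ((eventually_all_finset ρ).mpr fun v hv => hΦ v (X.coe_subset_verts hρ hv)).mono
      fun _ hr => Finset.image_congr hr
  refine ⟨Φ, ⟨?_, ?_, ?_⟩, fun ρ hρ => (himage ρ hρ).exists.imp fun _ hr => hr.symm⟩
  · intro u hu v hv huv
    obtain ⟨su, hsu⟩ := hA {u} hu
    obtain ⟨sv, hsv⟩ := hA {v} hv
    obtain ⟨r, hr, hru, hrv⟩ := ((hge (max su sv)).and ((hΦ u hu).and (hΦ v hv))).exists
    exact (hφ _ r hr).injOn (hA_mono (le_max_left su sv) hsu) (hA_mono (le_max_right su sv) hsv)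
      (by rw [hru, hrv, huv])
  · intro ρ hρ
    obtain ⟨s, hs⟩ := hA ρ hρ
    obtain ⟨r, hr, hρr⟩ := ((hge s).and (himage ρ hρ)).exists
    exact hρr ▸ hBY s ((hφ s r hr).mapsTo hs)
  · intro τ hτ
    obtain ⟨s, hs⟩ := hB τ hτ
    -- a preimage of `τ` can be chosen from the finite set `(A s).faces`, independently of `r`
    obtain ⟨ρ, hρ, hρτ⟩ := (Ultrafilter.eventually_exists_mem_iff (hA_fin s)).mp
      ((hge s).mono fun r hr => (hφ s r hr).surjOn hs)
    obtain ⟨r, hrτ, hrΦ⟩ := (hρτ.and (himage ρ (hAX s hρ))).exists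
    exact ⟨ρ, hAX s hρ, hrΦ ▸ hrτ⟩

theorem neighborhoods_determine_complex_general
    {V W : Type*} (d : ℕ)
    (X₁ : SComplex V) (σ₁ : Finset V) (X₂ : SComplex W) (σ₂ : Finset W)
    (hroot₁ : σ₁ ∈ simplices X₁ (d - 1)) (hroot₂ : σ₂ ∈ simplices X₂ (d - 1))
    (hlf₁ : LocallyFinite X₁ d) (hlf₂ : LocallyFinite X₂ d)
    (hconn₁ : DConnected X₁ d) (hconn₂ : DConnected X₂ d)
    (hballs : ∀ r : ℕ,
      Iso (⟨ball X₁ d σ₁ r, σ₁⟩ : Rooted V) (⟨ball X₂ d σ₂ r, σ₂⟩ : Rooted W)) :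
    Iso (⟨X₁, σ₁⟩ : Rooted V) (⟨X₂, σ₂⟩ : Rooted W) := by
  choose φ hφ hroot using fun r => iso_iff_exists_isFaceIso.mp (hballs r)
  obtain ⟨Φ, hΦ, hlim⟩ := exists_isFaceIso_of_exhaustion (fun _ => Set.inter_subset_left)
    (fun _ => Set.inter_subset_left) ball_faces_mono (fun _ => exists_mem_ball hroot₁ hconn₁)
    (fun _ => exists_mem_ball hroot₂ hconn₂) (ball_faces_finite hlf₁) (ball_faces_finite hlf₂)
    fun s r hsr => (hφ r).restrict_ball hroot₁.1 (hroot r) hsr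
  obtain ⟨r, hr⟩ := hlim σ₁ hroot₁.1
  exact iso_iff_exists_isFaceIso.mpr ⟨Φ, hΦ, hr.trans (hroot r)⟩

/-- Lemma A.2, neighborhoods determine the complex.
If `(X₁, σ₁)` and `(X₂, σ₂)` are `d`-dimensionally connected `(d-1)`-rooted
simplicial complexes, locally finite above dimension `d-1`, and
`B_{X₁}(σ₁; r) ≅ B_{X₂}(σ₂; r)` for every radius `r ≥ 0`, then
`(X₁, σ₁) ≅ (X₂, σ₂)`. -/
theorem neighborhoods_determine_complex
    {V W : Type*} (d : ℕ) (hd : 1 ≤ d)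
    (X₁ : SComplex V) (σ₁ : Finset V) (X₂ : SComplex W) (σ₂ : Finset W)
    (hroot₁ : σ₁ ∈ simplices X₁ (d - 1)) (hroot₂ : σ₂ ∈ simplices X₂ (d - 1))
    (hlf₁ : LocallyFinite X₁ d) (hlf₂ : LocallyFinite X₂ d)
    (hconn₁ : DConnected X₁ d) (hconn₂ : DConnected X₂ d)
    (hballs : ∀ r : ℕ,
      Iso (⟨ball X₁ d σ₁ r, σ₁⟩ : Rooted V) (⟨ball X₂ d σ₂ r, σ₂⟩ : Rooted W)) :
    Iso (⟨X₁, σ₁⟩ : Rooted V) (⟨X₂, σ₂⟩ : Rooted W) :=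
  neighborhoods_determine_complex_general d X₁ σ₁ X₂ σ₂ hroot₁ hroot₂ hlf₁ hlf₂ hconn₁ hconn₂ hballs

end RSC
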